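/- Let μ, h, h', φ, φ' : ℤ → ℝ and a, b ∈ ℝ with a ≠ 0 satisfy μ(n) > 0 for all n. For ψ : ℤ → ℂ define (Aψ)(n) := h(n)ψ(n+1)/μ(n) + φ(n)ψ(n), (A†ψ)(n) := h(n−1)ψ(n−1)/μ(n) + φ(n)ψ(n), (A'ψ)(n) := h'(n)ψ(n+1)/μ(n) + φ'(n)ψ(n), and (A'†ψ)(n) := h'(n−1)ψ(n−1)/μ(n) + φ'(n)ψ(n). Then the identity (A(A†ψ))(n) = a·(A'†(A'ψ))(n) + b·ψ(n), for all ψ : ℤ → ℂ and all n ∈ ℤ, holds if and only if for all n ∈ ℤ: (i) h'(n)·φ'(n) = (1/a)·h(n)·φ(n+1); and (ii) a·h'(n−1)²/(μ(n)·μ(n−1)) + a·φ'(n)² + b = h(n)²/(μ(n+1)·μ(n)) + φ(n)². -/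

import Mathlib

/-- `(Aψ)(n) = h(n)ψ(n+1)/μ(n) + φ(n)ψ(n)`. -/
noncomputable def opA (μ h φ : ℤ → ℝ) (ψ : ℤ → ℂ) (n : ℤ) : ℂ :=
  ((h n : ℝ) : ℂ) * ψ (n + 1) / ((μ n : ℝ) : ℂ) + ((φ n : ℝ) : ℂ) * ψ n

/-- `(A†ψ)(n) = h(n-1)ψ(n-1)/μ(n) + φ(n)ψ(n)`, the formal adjoint of `opA` in the
trivial-weight case `ρ ≡ 1`, `η ≡ 1`. -/
noncomputable def opAdag (μ h φ : ℤ → ℝ) (ψ : ℤ → ℂ) (n : ℤ) : ℂ :=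
  ((h (n - 1) : ℝ) : ℂ) * ψ (n - 1) / ((μ n : ℝ) : ℂ) + ((φ n : ℝ) : ℂ) * ψ n

/-!
Both `A A†` and `A'† A'` are three-term difference operators
`ψ ↦ l(n) ψ(n-1) + d(n) ψ(n) + u(n) ψ(n+1)`, and such an operator determines its coefficients
(test it on the Kronecker deltas at `n - 1`, `n`, `n + 1`). So the intertwining relation is
equivalent to matching three coefficients: the diagonal one gives (ii), the upper one gives (i),
and the lower one is (i) shifted by one step.
-/

section TridiagOp

variable {R M : Type*}

def tridiagOp [SMul R M] [Add M] (l d u : ℤ → R) (ψ : ℤ → M) (n : ℤ) : M :=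
  l n • ψ (n - 1) + d n • ψ n + u n • ψ (n + 1)

section Semiring

variable [Semiring R] [AddCommMonoid M] [Module R M] (l d u : ℤ → R) (k : ℤ) (m : M)

theorem tridiagOp_single_sub_one : tridiagOp l d u (Pi.single (k - 1) m) k = l k • m := by
  simp [tridiagOp, show k + 1 ≠ k - 1 by omega]

theorem tridiagOp_single_self : tridiagOp l d u (Pi.single k m) k = d k • m := by
  simp [tridiagOp]

theorem tridiagOp_single_add_one : tridiagOp l d u (Pi.single (k + 1) m) k = u k • m := by
  simp [tridiagOp, show k - 1 ≠ k + 1 by omega]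

theorem smul_tridiagOp_add_smul (c e : R) (ψ : ℤ → M) (n : ℤ) :
    c • tridiagOp l d u ψ n + e • ψ n =
      tridiagOp (c • l) (fun n => c * d n + e) (c • u) ψ n := by
  simp only [tridiagOp, Pi.smul_apply, smul_eq_mul, smul_add, add_smul, mul_smul]
  abel

end Semiring

theorem tridiagOp_eq_iff [Ring R] [IsCancelMulZero R] [AddCommGroup M] [Module R M]
    [Module.IsTorsionFree R M] [Nontrivial M] {l d u l' d' u' : ℤ → R} :
    (∀ ψ n, tridiagOp l d u ψ n = tridiagOp l' d' u' (ψ : ℤ → M) n) ↔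
      l = l' ∧ d = d' ∧ u = u' := by
  constructor
  · intro H
    obtain ⟨m, hm⟩ := exists_ne (0 : M)
    refine ⟨funext fun k => ?_, funext fun k => ?_, funext fun k => ?_⟩ <;>
      apply smul_left_injective R hm
    · simpa only [tridiagOp_single_sub_one] using H (Pi.single (k - 1) m) k
    · simpa only [tridiagOp_single_self] using H (Pi.single k m) k
    · simpa only [tridiagOp_single_add_one] using H (Pi.single (k + 1) m) k
  · rintro ⟨rfl, rfl, rfl⟩ _ _
    rfl

end TridiagOp

section Factorization

variable (μ h φ : ℤ → ℝ) (ψ : ℤ → ℂ) (n : ℤ)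

theorem opA_opAdag_apply :
    opA μ h φ (opAdag μ h φ ψ) n =
      tridiagOp (fun n => φ n * h (n - 1) / μ n)
        (fun n => h n ^ 2 / (μ (n + 1) * μ n) + φ n ^ 2) (fun n => h n * φ (n + 1) / μ n) ψ n := by
  simp only [opA, opAdag, tridiagOp, Complex.real_smul, add_sub_cancel_right]
  push_cast
  ring

theorem opAdag_opA_apply :
    opAdag μ h φ (opA μ h φ ψ) n =
      tridiagOp (fun n => h (n - 1) * φ (n - 1) / μ n)
        (fun n => h (n - 1) ^ 2 / (μ n * μ (n - 1)) + φ n ^ 2) (fun n => h n * φ n / μ n) ψ n := by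
  simp only [opA, opAdag, tridiagOp, Complex.real_smul, sub_add_cancel]
  push_cast
  ring

end Factorization

/-- Specialization of the factorization proposition to trivial weight functions:
the intertwining relation `A A† = a A'† A' + b` is equivalent to the relations
(i) `h'(n)φ'(n) = (1/a)·h(n)·φ(n+1)` and
(ii) `a·h'(n-1)²/(μ(n)μ(n-1)) + a·φ'(n)² + b = h(n)²/(μ(n+1)μ(n)) + φ(n)²`. -/
theorem statement_11
    (μ h h' φ φ' : ℤ → ℝ) (a b : ℝ) (ha : a ≠ 0) (hμ : ∀ n, 0 < μ n) :
    (∀ (ψ : ℤ → ℂ) (n : ℤ),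
        opA μ h φ (opAdag μ h φ ψ) n =
          (a : ℂ) * opAdag μ h' φ' (opA μ h' φ' ψ) n + (b : ℂ) * ψ n) ↔
      (∀ n : ℤ,
        (h' n * φ' n = (1 / a) * (h n * φ (n + 1))) ∧
        (a * (h' (n - 1)) ^ 2 / (μ n * μ (n - 1)) + a * (φ' n) ^ 2 + b =
          (h n) ^ 2 / (μ (n + 1) * μ n) + (φ n) ^ 2)) := by
  simp only [opA_opAdag_apply, opAdag_opA_apply, ← Complex.real_smul, smul_tridiagOp_add_smul,
    tridiagOp_eq_iff]
  have off_diag_iff (n : ℤ) (x y : ℝ) : x / μ n = a * (y / μ n) ↔ y = 1 / a * x := by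
    rw [← mul_div_assoc, div_left_inj' (hμ n).ne', one_div, eq_inv_mul_iff_mul_eq₀ ha, eq_comm]
  simp only [funext_iff, Pi.smul_apply, smul_eq_mul, off_diag_iff]
  constructor
  · rintro ⟨-, hdiag, hupper⟩ n
    exact ⟨hupper n, by linear_combination -hdiag n⟩
  · intro H
    refine ⟨fun n => ?_, fun n => by linear_combination -(H n).2, fun n => (H n).1⟩
    simpa only [sub_add_cancel, mul_comm (h (n - 1))] using (H (n - 1)).1
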